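/- arXiv:math/9210203 — 3 statements merged into one kernel-verified Lean document; each statement's English description precedes it below -/
import Mathlib

section
/- Let θ be a regular uncountable cardinal and assume that the principle □(θ) holds. Then there exists a θ-good subset of F_{θ,ω} × F_{θ,ω}. -/
open Cardinal Set TopologicalSpace

noncomputable section

/-- A subset `A` of a topological space is *separated* if there is a pairwise disjoint
family of open sets `U x` with `x ∈ U x` for each `x ∈ A`. -/
def IsSeparatedSet {X : Type*} [TopologicalSpace X] (A : Set X) : Prop :=
  ∃ U : X → Set X, (∀ x ∈ A, IsOpen (U x)) ∧ (∀ x ∈ A, x ∈ U x) ∧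
    ∀ x ∈ A, ∀ y ∈ A, x ≠ y → Disjoint (U x) (U y)

/-- A closed discrete subset of a topological space. -/
def IsClosedDiscreteSet {X : Type*} [TopologicalSpace X] (A : Set X) : Prop :=
  IsClosed A ∧ DiscreteTopology A

/-- `X` is `<κ`-collectionwise Hausdorff. -/
def CwHLt (X : Type) [TopologicalSpace X] (κ : Cardinal) : Prop :=
  ∀ A : Set X, IsClosedDiscreteSet A → #A < κ → IsSeparatedSet A

/-- `X` is `≤θ`-collectionwise Hausdorff. -/
def CwHLe (X : Type) [TopologicalSpace X] (θ : Cardinal) : Prop :=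
  ∀ A : Set X, IsClosedDiscreteSet A → #A ≤ θ → IsSeparatedSet A

/-- `X` is weakly `θ`-collectionwise Hausdorff. -/
def WeaklyCwH (X : Type) [TopologicalSpace X] (θ : Cardinal) : Prop :=
  ∀ A : Set X, IsClosedDiscreteSet A → #A = θ → ∃ B ⊆ A, #B = θ ∧ IsSeparatedSet B

/-- A space is zero-dimensional if it has a base of clopen sets. -/
def ZeroDimensional (X : Type*) [TopologicalSpace X] : Prop :=
  ∃ B : Set (Set X), IsTopologicalBasis B ∧ ∀ U ∈ B, IsClopen U

/-- A subset of `ω × ω` is closed downward. -/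
def IsCDW (H : Set (ℕ × ℕ)) : Prop :=
  ∀ p ∈ H, ∀ q : ℕ × ℕ, q.1 ≤ p.1 → q.2 ≤ p.2 → q ∈ H

/-- The fan `F_{θ,ω}`: points of `ι × ℕ` are isolated, and the sets
`B_f = {*} ∪ {(α, n) : f α ≤ n}` form a neighborhood base at `* = none`. -/
def fanTopology (ι : Type*) : TopologicalSpace (Option (ι × ℕ)) where
  IsOpen U := none ∈ U → ∃ f : ι → ℕ, ∀ p : ι × ℕ, f p.1 ≤ p.2 → some p ∈ U
  isOpen_univ := fun _ => ⟨fun _ => 0, fun _ _ => trivial⟩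
  isOpen_inter := by
    intro U V hU hV hmem
    obtain ⟨f, hf⟩ := hU hmem.1
    obtain ⟨g, hg⟩ := hV hmem.2
    exact ⟨fun α => max (f α) (g α), fun p hp =>
      ⟨hf p (le_trans (le_max_left _ _) hp), hg p (le_trans (le_max_right _ _) hp)⟩⟩
  isOpen_sUnion := by
    intro S hS hmem
    obtain ⟨U, hU, hnU⟩ := hmem
    obtain ⟨f, hf⟩ := hS U hU hnU
    exact ⟨f, fun p hp => ⟨U, hU, hf p hp⟩⟩

/-- The square of the fan `F_{θ,ω}`, with the product topology. -/
def fanSqTopology (ι : Type*) : TopologicalSpace (Option (ι × ℕ) × Option (ι × ℕ)) :=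
  @instTopologicalSpaceProd _ _ (fanTopology ι) (fanTopology ι)

/-- A subset `S` of `F_{θ,ω} × F_{θ,ω}` is `θ`-good if `(*,*)` is in the closure of `S`,
but not in the closure of any subset of `S` of cardinality `< θ`. -/
def IsThetaGood {ι : Type} (θ : Cardinal) (S : Set (Option (ι × ℕ) × Option (ι × ℕ))) : Prop :=
  (none, none) ∈ @closure _ (fanSqTopology ι) S ∧
    ∀ T ⊆ S, #T < θ → (none, none) ∉ @closure _ (fanSqTopology ι) T

/-- `C` is club in the (well-ordered) type `ι`: unbounded and closed under suprema of its
bounded nonempty subsets. -/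
def IsClubIn {ι : Type*} [LinearOrder ι] (C : Set ι) : Prop :=
  (∀ x : ι, ∃ y ∈ C, x < y) ∧
    ∀ s ⊆ C, s.Nonempty → ∀ x : ι, IsLUB s x → x ∈ C

/-- `S` is stationary in `ι`: it meets every club. -/
def IsStationaryIn {ι : Type*} [LinearOrder ι] (S : Set ι) : Prop :=
  ∀ C : Set ι, IsClubIn C → (S ∩ C).Nonempty

/-- `C` is a club subset of (the set of elements below) `γ`. -/
def IsClubBelow {ι : Type*} [LinearOrder ι] (C : Set ι) (γ : ι) : Prop :=
  C ⊆ Set.Iio γ ∧ (∀ x < γ, ∃ y ∈ C, x < y) ∧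
    ∀ s ⊆ C, s.Nonempty → ∀ x < γ, IsLUB s x → x ∈ C

/-- `S` is stationary below `γ`: it meets every club subset of `γ`. -/
def IsStationaryBelow {ι : Type*} [LinearOrder ι] (S : Set ι) (γ : ι) : Prop :=
  ∀ C : Set ι, IsClubBelow C γ → (S ∩ C).Nonempty

/-- `γ` is a limit element: nonzero and with no immediate predecessor. -/
def IsLimitElem {ι : Type*} [LinearOrder ι] (γ : ι) : Prop :=
  (∃ x, x < γ) ∧ ∀ x < γ, ∃ y, x < y ∧ y < γ

/-- `α` is a limit point of the set `s`. -/
def IsLimitPtOf {ι : Type*} [LinearOrder ι] (α : ι) (s : Set ι) : Prop :=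
  (∃ x, x < α) ∧ ∀ x < α, ∃ y ∈ s, x < y ∧ y < α

/-- `α` is a limit of countable cofinality: there is a strictly increasing `ω`-sequence
below `α` whose range is cofinal in `α`. -/
def CofOmega {ι : Type*} [LinearOrder ι] (α : ι) : Prop :=
  ∃ b : ℕ → ι, StrictMono b ∧ (∀ n, b n < α) ∧ ∀ ξ < α, ∃ n, ξ ≤ b n

/-- `E` is non-reflecting: `E ∩ γ` is non-stationary in `γ` for every limit `γ`. -/
def NonReflecting {ι : Type*} [LinearOrder ι] (E : Set ι) : Prop :=
  ∀ γ : ι, IsLimitElem γ → ¬ IsStationaryBelow (E ∩ Set.Iio γ) γ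

/-- The principle `□(θ)` for the well-order `ι` (of order type the initial ordinal of `θ`). -/
def SquareTheta (ι : Type*) [LinearOrder ι] : Prop :=
  ∃ C : ι → Set ι,
    (∀ α, IsLimitElem α → IsClubBelow (C α) α) ∧
    (∀ β, IsLimitElem β → ∀ α, IsLimitPtOf α (C β) → C α = C β ∩ Set.Iio α) ∧
    ¬ ∃ D : Set ι, IsClubIn D ∧ ∀ α, IsLimitPtOf α D → C α = D ∩ Set.Iio α

/-- `g` weakly bounds `h β` (where `h β` represents the function `h_β : β → ω`,
via `ξ ↦ h β ξ` for `ξ < β`): there is `n` with `g ξ + n > h β ξ` for all `ξ < β`. -/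
def WeaklyBounds {ι : Type*} [LinearOrder ι] (g : ι → ℕ) (h : ι → ι → ℕ) (β : ι) : Prop :=
  ∃ n : ℕ, ∀ ξ < β, h β ξ < g ξ + n

/-- The family `{h_β : β ∈ A}` is weakly bounded: a single `g` weakly bounds every member. -/
def WeaklyBoundedFam {ι : Type*} [LinearOrder ι] (h : ι → ι → ℕ) (A : Set ι) : Prop :=
  ∃ g : ι → ℕ, ∀ β ∈ A, WeaklyBounds g h β

/-- The `θ`-family `h` is initially weakly bounded. -/
def IWB {ι : Type} [LinearOrder ι] (θ : Cardinal) (h : ι → ι → ℕ) : Prop :=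
  ∀ A : Set ι, #A < θ → WeaklyBoundedFam h A

/-- The `θ`-family `h` is non-extendible: the whole family is not weakly bounded. -/
def NonExtendible {ι : Type*} [LinearOrder ι] (h : ι → ι → ℕ) : Prop :=
  ¬ WeaklyBoundedFam h Set.univ

end

namespace Pf15
open Set

section Basic
variable {ι : Type} [LinearOrder ι]

/-- unbounded subset -/
def Unbdd (X : Set ι) : Prop := ∀ x : ι, ∃ y ∈ X, x < y

variable [WellFoundedLT ι]

lemma exists_min (s : Set ι) (hs : s.Nonempty) : ∃ m, m ∈ s ∧ ∀ y ∈ s, m ≤ y := by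
  obtain ⟨m, hm, hmin⟩ := (wellFounded_lt (α := ι)).has_min s hs
  exact ⟨m, hm, fun y hy => not_lt.1 (hmin y hy)⟩

lemma exists_isLUB {s : Set ι} (hne : s.Nonempty) {b : ι} (hb : b ∈ upperBounds s) :
    ∃ w, IsLUB s w := by
  obtain ⟨m, hm, hmin⟩ := exists_min (upperBounds s) ⟨b, hb⟩
  exact ⟨m, hm, fun u hu => hmin u hu⟩

lemma omega_lub (hcts : ∀ s : Set ι, s.Countable → ∃ b, ∀ x ∈ s, x < b)
    (s : ℕ → ι) (hmono : ∀ n, s n < s (n+1)) :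
    ∃ w, (∀ n, s n < w) ∧ (∀ x, x < w → ∃ n, x < s n) ∧ IsLUB (range s) w := by
  obtain ⟨b, hb⟩ := hcts (range s) (countable_range s)
  obtain ⟨w, hw⟩ := exists_isLUB (range_nonempty s) (b := b) (fun x hx => (hb x hx).le)
  refine ⟨w, ?_, ?_, hw⟩
  · intro n; exact lt_of_lt_of_le (hmono n) (hw.1 ⟨n+1, rfl⟩)
  · intro x hx; by_contra h; push_neg at h
    exact absurd (hw.2 (fun y ⟨n, hn⟩ => hn ▸ h n)) (not_le.2 hx)

lemma closure_point (hcts : ∀ s : Set ι, s.Countable → ∃ b, ∀ x ∈ s, x < b)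
    (U : Set ι) (hU : Unbdd U) (g : ι → ι)
    (hg : ∀ z : ι, ∃ b, ∀ x ≤ z, g x < b) (z₀ : ι) :
    ∃ w, z₀ < w ∧ IsLimitPtOf w U ∧ ∀ x, x < w → g x < w := by
  have step : ∀ z : ι, ∃ y, y ∈ U ∧ z < y ∧ ∀ x ≤ z, g x < y := by
    intro z
    obtain ⟨b, hb⟩ := hg z
    obtain ⟨y, hyU, hy⟩ := hU (max z b)
    exact ⟨y, hyU, lt_of_le_of_lt (le_max_left _ _) hy,
      fun x hx => lt_of_lt_of_le (hb x hx) (le_of_lt (lt_of_le_of_lt (le_max_right _ _) hy))⟩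
  choose F hFU hFlt hFg using step
  set s : ℕ → ι := fun n => F^[n+1] z₀ with hs
  have hss : ∀ n, s (n+1) = F (s n) := by
    intro n; simp only [hs]; rw [Function.iterate_succ_apply']
  have hs0 : s 0 = F z₀ := rfl
  have hmono : ∀ n, s n < s (n+1) := by intro n; rw [hss]; exact hFlt (s n)
  obtain ⟨w, hw1, hw2, _⟩ := omega_lub hcts s hmono
  have hz0 : z₀ < w := by
    have := hFlt z₀; rw [← hs0] at this; exact this.trans (hw1 0)
  refine ⟨w, hz0, ⟨⟨z₀, hz0⟩, ?_⟩, ?_⟩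
  · intro x hx
    obtain ⟨n, hn⟩ := hw2 x hx
    refine ⟨s (n+1), by rw [hss]; exact hFU (s n), lt_trans hn (hmono n), hw1 (n+1)⟩
  · intro x hx
    obtain ⟨n, hn⟩ := hw2 x hx
    have : g x < s (n+1) := by rw [hss]; exact hFg (s n) x hn.le
    exact this.trans (hw1 (n+1))

/-- the set of limit points -/
def limPts (X : Set ι) : Set ι := {α | IsLimitPtOf α X}

omit [WellFoundedLT ι] in
lemma limPt_isLimitElem {X : Set ι} {α : ι} (h : IsLimitPtOf α X) : IsLimitElem α :=
  ⟨h.1, fun x hx => by obtain ⟨y, _, h1, h2⟩ := h.2 x hx; exact ⟨y, h1, h2⟩⟩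

omit [WellFoundedLT ι] in
lemma limPts_closed {X : Set ι} :
    ∀ s ⊆ limPts X, s.Nonempty → ∀ w, IsLUB s w → w ∈ limPts X := by
  intro s hs hne w hw
  obtain ⟨a, ha⟩ := hne
  constructor
  · rcases lt_or_eq_of_le (hw.1 ha) with h | h
    · exact ⟨a, h⟩
    · exact h ▸ (hs ha).1
  · intro x hx
    have : ∃ a ∈ s, x < a := by
      by_contra hcon; push_neg at hcon
      exact absurd (hw.2 hcon) (not_le.2 hx)
    obtain ⟨a, has, hxa⟩ := this
    rcases lt_or_eq_of_le (hw.1 has) with h | h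
    · obtain ⟨y, hy, h1, h2⟩ := (hs has).2 x hxa
      exact ⟨y, hy, h1, h2.trans h⟩
    · subst h
      exact (hs has).2 x hxa

lemma unbdd_limPts (hcts : ∀ s : Set ι, s.Countable → ∃ b, ∀ x ∈ s, x < b)
    (U : Set ι) (hU : Unbdd U) : Unbdd (limPts U) := by
  intro x
  obtain ⟨w, hw, hlim, _⟩ := closure_point hcts U hU (fun y => y)
    (fun z => by obtain ⟨y, _, hy⟩ := hU z; exact ⟨y, fun x hx => lt_of_le_of_lt hx hy⟩) x
  exact ⟨w, hlim, hw⟩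

lemma isClubIn_limPts (hcts : ∀ s : Set ι, s.Countable → ∃ b, ∀ x ∈ s, x < b)
    (U : Set ι) (hU : Unbdd U) : IsClubIn (limPts U) :=
  ⟨unbdd_limPts hcts U hU, fun s hs hne x hx => limPts_closed s hs hne x hx⟩

omit [WellFoundedLT ι] in
lemma isLUB_of_limPt {Y : Set ι} {α : ι} (h : IsLimitPtOf α Y) :
    IsLUB (Y ∩ Iio α) α := by
  constructor
  · intro y hy; exact hy.2.le
  · intro u hu
    by_contra hlt; push_neg at hlt
    obtain ⟨y, hy, h1, h2⟩ := h.2 u hlt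
    exact absurd (hu ⟨hy, h2⟩) (not_le.2 h1)

lemma unbdd_of_union_nat (hcts : ∀ s : Set ι, s.Countable → ∃ b, ∀ x ∈ s, x < b)
    (A : ℕ → Set ι) (hU : Unbdd (⋃ n, A n)) : ∃ n, Unbdd (A n) := by
  by_contra h; push_neg at h
  have h2 : ∀ n, ∃ x, ∀ y ∈ A n, y ≤ x := by
    intro n
    have hn := h n; unfold Unbdd at hn; push_neg at hn
    obtain ⟨x, hx⟩ := hn
    exact ⟨x, fun y hy => hx y hy⟩
  choose b hb using h2
  obtain ⟨B, hB⟩ := hcts (range b) (countable_range b)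
  obtain ⟨y, hy, hBy⟩ := hU B
  obtain ⟨n, hn⟩ := mem_iUnion.1 hy
  exact absurd ((hb n y hn).trans (hB (b n) ⟨n, rfl⟩).le) (not_le.2 hBy)

lemma unbdd_subset_union_nat (hcts : ∀ s : Set ι, s.Countable → ∃ b, ∀ x ∈ s, x < b)
    {U : Set ι} (A : ℕ → Set ι) (hU : Unbdd U)
    (hsub : U ⊆ ⋃ n, A n) : ∃ n, Unbdd (A n) := by
  refine unbdd_of_union_nat hcts A (fun x => ?_)
  obtain ⟨y, hy, hxy⟩ := hU x
  exact ⟨y, hsub hy, hxy⟩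

end Basic
end Pf15

namespace Pf15
open Set

section Walks
variable {ι : Type} [LinearOrder ι] [WellFoundedLT ι]
variable (C : ι → Set ι)
open scoped Classical

/-- the adjusted `C`-sequence: for limit `β` the club `C β`, for a successor the
singleton of its predecessor, for the minimum the empty set -/
noncomputable def Cs (β : ι) : Set ι :=
  if IsLimitElem β then C β ∩ Iio β else {x | x < β ∧ ∀ y, x < y → β ≤ y}

lemma Cs_subset (β : ι) : Cs C β ⊆ Iio β := by
  unfold Cs; split_ifs
  · exact inter_subset_right
  · exact fun x hx => hx.1

variable (hC1 : ∀ α, IsLimitElem α → IsClubBelow (C α) α)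
include hC1

lemma Cs_above {β ξ : ι} (h : ξ < β) : ∃ y, y ∈ Cs C β ∧ ξ ≤ y := by
  unfold Cs; split_ifs with hl
  · obtain ⟨y, hy, hxy⟩ := (hC1 β hl).2.1 ξ h
    exact ⟨y, ⟨hy, (hC1 β hl).1 hy⟩, hxy.le⟩
  · have hex : ∃ x, x < β ∧ ∀ y, x < y → β ≤ y := by
      by_contra hcon; push_neg at hcon
      exact hl ⟨⟨ξ, h⟩, fun x hx => by
        obtain ⟨y, hy1, hy2⟩ := hcon x hx; exact ⟨y, hy1, hy2⟩⟩
    obtain ⟨x, hx1, hx2⟩ := hex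
    refine ⟨x, ⟨hx1, hx2⟩, ?_⟩
    by_contra hlt; push_neg at hlt
    exact absurd (hx2 ξ hlt) (not_le.2 h)

/-- the next step of the walk from `β` down towards `ξ` -/
noncomputable def nxt (β ξ : ι) : ι := by
  classical
  exact if h : {y | y ∈ Cs C β ∧ ξ ≤ y}.Nonempty then (exists_min _ h).choose else ξ

lemma nxt_spec {β ξ : ι} (h : ξ < β) :
    nxt C β ξ ∈ Cs C β ∧ ξ ≤ nxt C β ξ ∧ ∀ y ∈ Cs C β, ξ ≤ y → nxt C β ξ ≤ y := by
  have hne : {y | y ∈ Cs C β ∧ ξ ≤ y}.Nonempty := by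
    obtain ⟨y, h1, h2⟩ := Cs_above C hC1 h; exact ⟨y, h1, h2⟩
  have hspec := (exists_min {y | y ∈ Cs C β ∧ ξ ≤ y} hne).choose_spec
  rw [nxt, dif_pos hne]
  exact ⟨hspec.1.1, hspec.1.2, fun y hy hxy => hspec.2 y ⟨hy, hxy⟩⟩

lemma nxt_lt {β ξ : ι} (h : ξ < β) : nxt C β ξ < β :=
  Cs_subset C β (nxt_spec C hC1 h).1

lemma nxt_ge {β ξ : ι} (h : ξ < β) : ξ ≤ nxt C β ξ :=
  (nxt_spec C hC1 h).2.1

/-- `rk β ξ` = ρ₂(ξ,β), the number of steps of the walk from `β` down to `ξ` -/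
noncomputable def rk : ι → ι → ℕ :=
  WellFounded.fix (wellFounded_lt) (fun β IH ξ =>
    if h : ξ < β then IH (nxt C β ξ) (nxt_lt C hC1 h) ξ + 1 else 0)

lemma rk_eq (β ξ : ι) :
    rk C hC1 β ξ = if ξ < β then rk C hC1 (nxt C β ξ) ξ + 1 else 0 := by
  unfold rk
  rw [WellFounded.fix_eq]
  split_ifs with h <;> rfl

lemma rk_pos {β ξ : ι} (h : ξ < β) : 1 ≤ rk C hC1 β ξ := by
  rw [rk_eq C hC1 β ξ, if_pos h]; omega

lemma rk_self (ξ : ι) : rk C hC1 ξ ξ = 0 := by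
  rw [rk_eq, if_neg (lt_irrefl ξ)]

/-- `ck β α` : the number of proper steps of the walk from `β` before capturing `α` -/
noncomputable def ck : ι → ι → ℕ :=
  WellFounded.fix (wellFounded_lt) (fun β IH α =>
    if h : α < β then
      (if IsLimitPtOf α (Cs C β) then 0
       else if hn : nxt C β α = α then 1
       else IH (nxt C β α) (nxt_lt C hC1 h) α + 1)
    else 0)

lemma ck_eq (β α : ι) :
    ck C hC1 β α = if α < β then
      (if IsLimitPtOf α (Cs C β) then 0
       else if nxt C β α = α then 1
       else ck C hC1 (nxt C β α) α + 1)
    else 0 := by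
  unfold ck
  rw [WellFounded.fix_eq]
  split_ifs with h h1 h2 <;> rfl

lemma ck_eq_zero_iff {β α : ι} (h : α < β) :
    ck C hC1 β α = 0 ↔ IsLimitPtOf α (Cs C β) := by
  rw [ck_eq, if_pos h]
  split_ifs with h1 h2
  · simp [h1]
  · simp [h1]
  · simp [h1]

end Walks
end Pf15

namespace Pf15
open Set

section Walks2
variable {ι : Type} [LinearOrder ι] [WellFoundedLT ι]
variable (C : ι → Set ι)
variable (hC1 : ∀ α, IsLimitElem α → IsClubBelow (C α) α)
variable (hC2 : ∀ β, IsLimitElem β → ∀ α, IsLimitPtOf α (C β) → C α = C β ∩ Set.Iio α)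

omit [WellFoundedLT ι] in
lemma notLP_tail {β α : ι} (hα : IsLimitElem α) (h : ¬ IsLimitPtOf α (Cs C β)) :
    ∃ lam, lam < α ∧ ∀ y ∈ Cs C β, ¬(lam < y ∧ y < α) := by
  unfold IsLimitPtOf at h
  push_neg at h
  obtain ⟨lam, hlam, hy⟩ := h hα.1
  exact ⟨lam, hlam, fun y hy1 hy2 => by
    obtain ⟨h1, h2⟩ := hy2; exact absurd (hy y hy1 h1) (not_le.2 h2)⟩

omit [WellFoundedLT ι] in
include hC2 in
lemma coh_of_LP {α β : ι} (h1 : α < β) (h2 : IsLimitPtOf α (Cs C β)) :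
    IsLimitElem α ∧ IsLimitElem β ∧ C α = C β ∩ Iio α ∧ Cs C α = Cs C β ∩ Iio α := by
  have hαlim : IsLimitElem α := limPt_isLimitElem h2
  have hβlim : IsLimitElem β := by
    by_contra hβ
    obtain ⟨x₀, hx₀⟩ := h2.1
    obtain ⟨y₀, hy₀, hy₀1, hy₀2⟩ := h2.2 x₀ hx₀
    obtain ⟨y₁, hy₁, hy₁1, hy₁2⟩ := h2.2 y₀ hy₀2
    rw [Cs, if_neg hβ] at hy₀ hy₁
    exact absurd (hy₀.2 y₁ hy₁1) (not_le.2 hy₁.1)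
  have hCseq : Cs C β = C β ∩ Iio β := by rw [Cs, if_pos hβlim]
  have hLPC : IsLimitPtOf α (C β) := by
    refine ⟨h2.1, fun x hx => ?_⟩
    obtain ⟨y, hy, hy1, hy2⟩ := h2.2 x hx
    rw [hCseq] at hy
    exact ⟨y, hy.1, hy1, hy2⟩
  have hcoh := hC2 β hβlim α hLPC
  refine ⟨hαlim, hβlim, hcoh, ?_⟩
  rw [Cs, if_pos hαlim, hCseq, hcoh]
  ext x
  simp only [mem_inter_iff, mem_Iio]
  constructor
  · rintro ⟨⟨h3, h4⟩, h5⟩; exact ⟨⟨h3, h4.trans h1⟩, h4⟩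
  · rintro ⟨⟨h3, h4⟩, h5⟩; exact ⟨⟨h3, h5⟩, h5⟩

include hC1 hC2 in
lemma nxt_of_LP {α β : ι} (h1 : α < β) (h2 : IsLimitPtOf α (Cs C β)) :
    ∀ ξ, ξ < α → nxt C β ξ = nxt C α ξ := by
  intro ξ hξ
  obtain ⟨hαlim, hβlim, hcohC, hcohCs⟩ := coh_of_LP C hC2 h1 h2
  have hξβ : ξ < β := hξ.trans h1
  have hsβ := nxt_spec C hC1 hξβ
  have hsα := nxt_spec C hC1 hξ
  obtain ⟨y, hy, hy1, hy2⟩ := h2.2 ξ hξ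
  have hnβα : nxt C β ξ < α := lt_of_le_of_lt (hsβ.2.2 y hy hy1.le) hy2
  have hmemα : nxt C β ξ ∈ Cs C α := by rw [hcohCs]; exact ⟨hsβ.1, hnβα⟩
  have h5 : nxt C α ξ ≤ nxt C β ξ := hsα.2.2 _ hmemα hsβ.2.1
  have hmemβ : nxt C α ξ ∈ Cs C β := by
    have := hsα.1; rw [hcohCs] at this; exact this.1
  have h6 : nxt C β ξ ≤ nxt C α ξ := hsβ.2.2 _ hmemβ hsα.2.1
  exact le_antisymm h6 h5

include hC1 hC2 in
lemma rk_of_LP {α β : ι} (h1 : α < β) (h2 : IsLimitPtOf α (Cs C β)) :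
    ∀ ξ, ξ < α → rk C hC1 β ξ = rk C hC1 α ξ := by
  intro ξ hξ
  rw [rk_eq C hC1 β ξ, rk_eq C hC1 α ξ, if_pos (hξ.trans h1), if_pos hξ,
    nxt_of_LP C hC1 hC2 h1 h2 ξ hξ]

include hC1 hC2 in
lemma tail_coh : ∀ β α, IsLimitElem α → α < β →
    ∃ lam, lam < α ∧ ∀ ξ, lam < ξ → ξ < α →
      rk C hC1 β ξ = ck C hC1 β α + rk C hC1 α ξ := by
  intro β
  refine (wellFounded_lt (α := ι)).induction
    (C := fun β => ∀ α, IsLimitElem α → α < β → ∃ lam, lam < α ∧ ∀ ξ, lam < ξ → ξ < α →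
      rk C hC1 β ξ = ck C hC1 β α + rk C hC1 α ξ) β ?_
  intro β IH α hα hαβ
  by_cases hLP : IsLimitPtOf α (Cs C β)
  · obtain ⟨x₀, hx₀⟩ := hα.1
    refine ⟨x₀, hx₀, fun ξ _ hξ => ?_⟩
    rw [ck_eq C hC1 β α, if_pos hαβ, if_pos hLP, rk_of_LP C hC1 hC2 hαβ hLP ξ hξ, zero_add]
  · obtain ⟨lam₀, hlam₀, hgap⟩ := notLP_tail C hα hLP
    have hspec := nxt_spec C hC1 hαβ
    by_cases hδ : nxt C β α = α
    · -- member case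
      refine ⟨lam₀, hlam₀, fun ξ hξ1 hξ2 => ?_⟩
      have hnxt : nxt C β ξ = α := by
        have hξβ : ξ < β := hξ2.trans hαβ
        have hs := nxt_spec C hC1 hξβ
        have hle : nxt C β ξ ≤ α := hs.2.2 α (hδ ▸ hspec.1) hξ2.le
        rcases lt_or_eq_of_le hle with hlt | he
        · exact absurd ⟨lt_of_lt_of_le hξ1 hs.2.1, hlt⟩ (hgap _ hs.1)
        · exact he
      rw [rk_eq C hC1 β ξ, if_pos (hξ2.trans hαβ), hnxt,
        ck_eq C hC1 β α, if_pos hαβ, if_neg hLP, if_pos hδ]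
      omega
    · -- proper step case
      have hαδ : α < nxt C β α := lt_of_le_of_ne hspec.2.1 (Ne.symm hδ)
      have hδβ : nxt C β α < β := nxt_lt C hC1 hαβ
      obtain ⟨lam₁, hlam₁, htail₁⟩ := IH (nxt C β α) hδβ α hα hαδ
      refine ⟨max lam₀ lam₁, max_lt hlam₀ hlam₁, fun ξ hξ1 hξ2 => ?_⟩
      have hξ0 : lam₀ < ξ := lt_of_le_of_lt (le_max_left _ _) hξ1
      have hξ1' : lam₁ < ξ := lt_of_le_of_lt (le_max_right _ _) hξ1
      have hξβ : ξ < β := hξ2.trans hαβ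
      have hs := nxt_spec C hC1 hξβ
      have hnxt : nxt C β ξ = nxt C β α := by
        have hle : nxt C β ξ ≤ nxt C β α := hs.2.2 _ hspec.1 (hξ2.le.trans hspec.2.1)
        have hge : α ≤ nxt C β ξ := by
          by_contra hcon; push_neg at hcon
          exact absurd ⟨lt_of_lt_of_le hξ0 hs.2.1, hcon⟩ (hgap _ hs.1)
        exact le_antisymm hle (hspec.2.2 _ hs.1 hge)
      rw [rk_eq C hC1 β ξ, if_pos hξβ, hnxt, htail₁ ξ hξ1' hξ2,
        ck_eq C hC1 β α, if_pos hαβ, if_neg hLP, if_neg hδ]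
      omega

include hC1 hC2 in
lemma coh : ∀ β γ, β ≤ γ → ∃ n, ∀ ξ, ξ < β →
    rk C hC1 β ξ ≤ rk C hC1 γ ξ + n ∧ rk C hC1 γ ξ ≤ rk C hC1 β ξ + n := by
  intro β
  refine (wellFounded_lt (α := ι)).induction
    (C := fun β => ∀ γ, β ≤ γ → ∃ n, ∀ ξ, ξ < β →
      rk C hC1 β ξ ≤ rk C hC1 γ ξ + n ∧ rk C hC1 γ ξ ≤ rk C hC1 β ξ + n) β ?_
  intro β IH γ hβγ
  rcases eq_or_lt_of_le hβγ with rfl | hlt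
  · exact ⟨0, fun ξ _ => ⟨le_self_add, le_self_add⟩⟩
  by_cases hex : ∃ x, x < β
  case neg => exact ⟨0, fun ξ hξ => absurd ⟨ξ, hξ⟩ hex⟩
  by_cases hβlim : IsLimitElem β
  · obtain ⟨lam, hlam, htail⟩ := tail_coh C hC1 hC2 γ β hβlim hlt
    obtain ⟨β', hβ'1, hβ'2⟩ := hβlim.2 lam hlam
    obtain ⟨n₁, hn₁⟩ := IH β' hβ'2 γ (le_of_lt (hβ'2.trans hlt))
    obtain ⟨n₂, hn₂⟩ := IH β' hβ'2 β (le_of_lt hβ'2)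
    refine ⟨ck C hC1 γ β + n₁ + n₂, fun ξ hξ => ?_⟩
    by_cases hξlam : lam < ξ
    · have h := htail ξ hξlam hξ
      omega
    · push_neg at hξlam
      have hξβ' : ξ < β' := lt_of_le_of_lt hξlam hβ'1
      have h1 := hn₁ ξ hξβ'
      have h2 := hn₂ ξ hξβ'
      omega
  · obtain ⟨s, hs1, hs2⟩ : ∃ s, s < β ∧ ∀ y, s < y → β ≤ y := by
      by_contra hcon; push_neg at hcon
      exact hβlim ⟨hex, fun x hx => by
        obtain ⟨y, h1, h2⟩ := hcon x hx; exact ⟨y, h1, h2⟩⟩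
    have hCsnb : Cs C β = {x | x < β ∧ ∀ y, x < y → β ≤ y} := by
      rw [Cs, if_neg hβlim]
    have hCss : ∀ ξ, ξ < β → nxt C β ξ = s := by
      intro ξ hξ
      have hs := nxt_spec C hC1 hξ
      have hmem := hs.1
      rw [hCsnb] at hmem
      rcases lt_trichotomy (nxt C β ξ) s with h | h | h
      · exact absurd (hmem.2 s h) (not_le.2 hs1)
      · exact h
      · exact absurd (hs2 _ h) (not_le.2 hmem.1)
    have hrk : ∀ ξ, ξ < β → rk C hC1 β ξ = rk C hC1 s ξ + 1 := by
      intro ξ hξ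
      rw [rk_eq C hC1 β ξ, if_pos hξ, hCss ξ hξ]
    obtain ⟨n₁, hn₁⟩ := IH s hs1 γ (hs1.le.trans hβγ)
    refine ⟨n₁ + rk C hC1 γ s + 2, fun ξ hξ => ?_⟩
    have hξs : ξ ≤ s := by
      by_contra hcon; push_neg at hcon
      exact absurd (hs2 ξ hcon) (not_le.2 hξ)
    rcases lt_or_eq_of_le hξs with hlt' | rfl
    · have h1 := hn₁ ξ hlt'
      have h2 := hrk ξ hξ
      omega
    · have h2 := hrk ξ hξ
      have h3 := rk_self C hC1 ξ
      omega

end Walks2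
end Pf15

namespace Pf15
open Set

section Steps
variable {ι : Type} [LinearOrder ι] [WellFoundedLT ι]
variable (C : ι → Set ι)
variable (hC1 : ∀ α, IsLimitElem α → IsClubBelow (C α) α)
variable (hC2 : ∀ β, IsLimitElem β → ∀ α, IsLimitPtOf α (C β) → C α = C β ∩ Set.Iio α)

include hC1 hC2 in
lemma build_thread (Q : Set ι) (hQu : Unbdd Q)
    (hQlim : ∀ α ∈ Q, IsLimitElem α)
    (hQcoh : ∀ α ∈ Q, ∀ α' ∈ Q, α < α' → IsLimitPtOf α (Cs C α')) :
    ∃ D, IsClubIn D ∧ ∀ τ, IsLimitPtOf τ D → C τ = D ∩ Iio τ := by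
  have hCC : ∀ α ∈ Q, ∀ α' ∈ Q, α < α' → C α = C α' ∩ Iio α := by
    intro α hα α' hα' hlt
    exact (coh_of_LP C hC2 hlt (hQcoh α hα α' hα' hlt)).2.2.1
  set D : Set ι := {x | ∃ α ∈ Q, x ∈ C α} with hD
  have hsub : ∀ α ∈ Q, C α ⊆ Iio α := fun α hα => (hC1 α (hQlim α hα)).1
  have hDα : ∀ α ∈ Q, D ∩ Iio α = C α := by
    intro α hα
    ext x
    constructor
    · rintro ⟨⟨α'', hα'', hx⟩, hxα⟩
      rcases lt_trichotomy α'' α with h | h | h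
      · have := hCC α'' hα'' α hα h
        rw [this] at hx; exact hx.1
      · exact h ▸ hx
      · have := hCC α hα α'' hα'' h
        rw [this]; exact ⟨hx, hxα⟩
    · intro hx
      exact ⟨⟨α, hα, hx⟩, hsub α hα hx⟩
  refine ⟨D, ⟨?_, ?_⟩, ?_⟩
  · -- unbounded
    intro x
    obtain ⟨α, hα, hxα⟩ := hQu x
    obtain ⟨y, hy, hxy⟩ := (hC1 α (hQlim α hα)).2.1 x hxα
    exact ⟨y, ⟨α, hα, hy⟩, hxy⟩
  · -- closed
    intro s hs hne w hw
    obtain ⟨α, hα, hwα⟩ := hQu w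
    have hsC : s ⊆ C α := by
      intro y hy
      have : y ∈ D ∩ Iio α := ⟨hs hy, lt_of_le_of_lt (hw.1 hy) hwα⟩
      rw [hDα α hα] at this; exact this
    have := (hC1 α (hQlim α hα)).2.2 s hsC hne w hwα hw
    exact ⟨α, hα, this⟩
  · -- thread property
    intro τ hτ
    obtain ⟨α, hα, hτα⟩ := hQu τ
    have hDτ : D ∩ Iio τ = C α ∩ Iio τ := by
      rw [← hDα α hα]
      ext x
      simp only [mem_inter_iff, mem_Iio]
      constructor
      · rintro ⟨h1, h2⟩; exact ⟨⟨h1, h2.trans hτα⟩, h2⟩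
      · rintro ⟨⟨h1, _⟩, h3⟩; exact ⟨h1, h3⟩
    have hLP : IsLimitPtOf τ (C α) := by
      refine ⟨hτ.1, fun x hx => ?_⟩
      obtain ⟨y, hy, h1, h2⟩ := hτ.2 x hx
      have : y ∈ C α ∩ Iio τ := by rw [← hDτ]; exact ⟨hy, h2⟩
      exact ⟨y, this.1, h1, h2⟩
    rw [hC2 α (hQlim α hα) τ hLP, hDτ]

include hC1 hC2 in
lemma steps (hcts : ∀ s : Set ι, s.Countable → ∃ b, ∀ x ∈ s, x < b)
    (hIic : ∀ g : ι → ι, ∀ z : ι, ∃ b, ∀ x ≤ z, g x < b)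
    (X : Set ι) (hX : Unbdd X) (M : ℕ)
    (hb : ∀ ξ β, ξ ∈ X → β ∈ X → ξ < β → rk C hC1 β ξ ≤ M) :
    ∃ D, IsClubIn D ∧ ∀ τ, IsLimitPtOf τ D → C τ = D ∩ Iio τ := by
  classical
  rcases isEmpty_or_nonempty ι with hempty | hne
  · refine ⟨∅, ⟨fun x => (hempty.false x).elim, fun s hs hne x hx => (hempty.false x).elim⟩,
      fun τ => (hempty.false τ).elim⟩
  set L := limPts X with hL
  have hLlim : ∀ α ∈ L, IsLimitElem α := fun α hα => limPt_isLimitElem hα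
  have hLclub : IsClubIn L := isClubIn_limPts hcts X hX
  -- capture numbers are bounded by M
  have hck : ∀ α ∈ L, ∀ β ∈ X, α < β → ck C hC1 β α ≤ M := by
    intro α hαL β hβX hαβ
    obtain ⟨lam, hlam, htail⟩ := tail_coh C hC1 hC2 β α (hLlim α hαL) hαβ
    obtain ⟨ξ, hξX, hξ1, hξ2⟩ := hαL.2 lam hlam
    have h1 := htail ξ hξ1 hξ2
    have h2 := hb ξ β hξX hβX (hξ2.trans hαβ)
    have h3 := rk_pos C hC1 hξ2
    omega
  set A : ι → ℕ → Set ι := fun α k => {β | β ∈ X ∧ α < β ∧ ck C hC1 β α = k} with hA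
  have hAex : ∀ α ∈ L, ∃ k, Unbdd (A α k) := by
    intro α hαL
    refine unbdd_subset_union_nat hcts (A α) (U := {β | β ∈ X ∧ α < β}) ?_ ?_
    · intro x
      obtain ⟨y, hy, hxy⟩ := hX (max x α)
      exact ⟨y, ⟨hy, lt_of_le_of_lt (le_max_right _ _) hxy⟩,
        lt_of_le_of_lt (le_max_left _ _) hxy⟩
    · rintro β ⟨h1, h2⟩
      exact mem_iUnion.2 ⟨ck C hC1 β α, h1, h2, rfl⟩
  set kf : ι → ℕ := fun α => Nat.findGreatest (fun k => Unbdd (A α k)) M with hkf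
  have hkfle : ∀ α, kf α ≤ M := fun α => Nat.findGreatest_le M
  have hkfspec : ∀ α ∈ L, Unbdd (A α (kf α)) := by
    intro α hαL
    obtain ⟨k, hk⟩ := hAex α hαL
    have hkM : k ≤ M := by
      obtain ⟨β, hβ, _⟩ := hk α
      rw [← hβ.2.2]
      exact hck α hαL β hβ.1 hβ.2.1
    exact Nat.findGreatest_spec (P := fun k => Unbdd (A α k)) hkM hk
  have hkfmax : ∀ α ∈ L, ∀ k, kf α < k → ¬ Unbdd (A α k) := by
    intro α hαL k hk hunb
    by_cases hkM : k ≤ M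
    · exact Nat.findGreatest_is_greatest hk hkM hunb
    · push_neg at hkM
      obtain ⟨β, hβ, _⟩ := hunb α
      have h1 := hck α hαL β hβ.1 hβ.2.1
      have h2 := hβ.2.2
      omega
  -- the bound beyond which capture numbers are at most kf α
  have hγex : ∀ α, ∃ gc : ι, α ∈ L → ∀ β ∈ X, α < β → gc < β → ck C hC1 β α ≤ kf α := by
    intro α
    by_cases hαL : α ∈ L
    · have hbj : ∀ j : ℕ, ∃ x, ∀ y ∈ A α (kf α + j + 1), y ≤ x := by
        intro j
        have := hkfmax α hαL (kf α + j + 1) (by omega)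
        unfold Unbdd at this; push_neg at this
        obtain ⟨x, hx⟩ := this
        exact ⟨x, fun y hy => hx y hy⟩
      choose bj hbj using hbj
      obtain ⟨B, hB⟩ := hcts (range bj) (countable_range bj)
      refine ⟨B, fun _ β hβX hαβ hBβ => ?_⟩
      by_contra hcon; push_neg at hcon
      have hβA : β ∈ A α (kf α + (ck C hC1 β α - kf α - 1) + 1) := by
        refine ⟨hβX, hαβ, by omega⟩
      have h1 := hbj _ β hβA
      have h2 := hB _ ⟨(ck C hC1 β α - kf α - 1), rfl⟩
      exact absurd (h1.trans h2.le) (not_le.2 hBβ)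
    · exact ⟨α, fun h => absurd h hαL⟩
  choose γc hγc using hγex
  -- the closure club W'
  set W : Set ι := {w | w ∈ L ∧ ∀ x, x < w → γc x < w} with hW
  have hWL : W ⊆ L := fun w hw => hw.1
  have hWclosed : ∀ s ⊆ W, s.Nonempty → ∀ w, IsLUB s w → w ∈ W := by
    intro s hs hne w hw
    have hwL : w ∈ L := hLclub.2 s (fun y hy => hWL (hs hy)) hne w hw
    refine ⟨hwL, fun x hx => ?_⟩
    have : ∃ w' ∈ s, x < w' := by
      by_contra hcon; push_neg at hcon
      exact absurd (hw.2 hcon) (not_le.2 hx)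
    obtain ⟨w', hw', hxw'⟩ := this
    exact lt_of_lt_of_le ((hs hw').2 x hxw') (hw.1 hw')
  have hWunb : Unbdd W := by
    intro z
    obtain ⟨w, hzw, hwlim, hwcl⟩ := closure_point hcts X hX γc (hIic γc) z
    exact ⟨w, ⟨hwlim, hwcl⟩, hzw⟩
  -- key inequality
  have hkey : ∀ α₁ α₂ β lam₂, α₁ ∈ W → α₂ ∈ W → β ∈ X → α₁ < α₂ → α₂ < β → γc α₂ < β →
      ck C hC1 β α₂ = kf α₂ →
      (∀ ξ, lam₂ < ξ → ξ < α₂ → rk C hC1 β ξ = ck C hC1 β α₂ + rk C hC1 α₂ ξ) →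
      lam₂ < α₁ →
      kf α₂ + ck C hC1 α₂ α₁ ≤ kf α₁ := by
    intro α₁ α₂ β lam₂ h1W h2W hβX h12 h2β hγ2β hckeq htail₂ hlam₂
    have h1L : α₁ ∈ L := hWL h1W
    have h1lim : IsLimitElem α₁ := hLlim α₁ h1L
    have h1β : α₁ < β := h12.trans h2β
    obtain ⟨lam₁, hlam₁, htail₁⟩ := tail_coh C hC1 hC2 β α₁ h1lim h1β
    obtain ⟨lam₃, hlam₃, htail₃⟩ := tail_coh C hC1 hC2 α₂ α₁ h1lim h12
    have hmax : max (max lam₁ lam₃) lam₂ < α₁ := by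
      simp only [max_lt_iff]
      exact ⟨⟨hlam₁, hlam₃⟩, hlam₂⟩
    obtain ⟨ξ, hξX, hξ1, hξ2⟩ := h1L.2 _ hmax
    simp only [max_lt_iff] at hξ1
    have e1 := htail₁ ξ hξ1.1.1 hξ2
    have e2 := htail₂ ξ hξ1.2 (hξ2.trans h12)
    have e3 := htail₃ ξ hξ1.1.2 hξ2
    have e4 : ck C hC1 β α₁ ≤ kf α₁ := by
      refine hγc α₁ h1L β hβX h1β ?_
      exact lt_trans (h2W.2 α₁ h12) h2β
    omega
  -- pigeonhole for the levels on W
  have hWcover : ∃ k, Unbdd {α | α ∈ W ∧ kf α = k} := by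
    refine unbdd_subset_union_nat hcts (fun k => {α | α ∈ W ∧ kf α = k}) hWunb ?_
    intro α hα
    exact mem_iUnion.2 ⟨kf α, hα, rfl⟩
  set kb := Nat.find hWcover with hkb
  have hkbspec : Unbdd {α | α ∈ W ∧ kf α = kb} := Nat.find_spec hWcover
  have hkbmin : ∀ k, k < kb → ¬ Unbdd {α | α ∈ W ∧ kf α = k} := fun k hk => Nat.find_min hWcover hk
  -- bound for the lower classes
  have hbj : ∀ j : ℕ, ∃ x, ∀ y ∈ (if j < kb then {α | α ∈ W ∧ kf α = j} else (∅ : Set ι)), y ≤ x := by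
    intro j
    split_ifs with hj
    · have := hkbmin j hj
      unfold Unbdd at this; push_neg at this
      obtain ⟨x, hx⟩ := this
      exact ⟨x, fun y hy => hx y hy⟩
    · exact ⟨Classical.arbitrary ι, fun y hy => absurd hy (Set.notMem_empty y)⟩
  choose bj hbj using hbj
  obtain ⟨Bb, hBb⟩ := hcts (range bj) (countable_range bj)
  set Y : Set ι := {α | α ∈ W ∧ kf α = kb ∧ Bb < α} with hY
  have hYunb : Unbdd Y := by
    intro z
    obtain ⟨α, hα, hzα⟩ := hkbspec (max z Bb)
    exact ⟨α, ⟨hα.1, hα.2, lt_of_le_of_lt (le_max_right _ _) hzα⟩,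
      lt_of_le_of_lt (le_max_left _ _) hzα⟩
  -- main claim: limit points of Y are in Y, and coherence holds on a tail
  have hstar : ∀ α, IsLimitPtOf α Y → α ∈ Y ∧ ∃ lam, lam < α ∧
      ∀ α₁ ∈ Y, lam < α₁ → α₁ < α → IsLimitPtOf α₁ (Cs C α) := by
    intro α hlimY
    have hαW : α ∈ W := by
      refine hWclosed (Y ∩ Iio α) (fun y hy => hy.1.1) ?_ α (isLUB_of_limPt hlimY)
      · obtain ⟨x₀, hx₀⟩ := hlimY.1
        obtain ⟨y, hy, h1, h2⟩ := hlimY.2 x₀ hx₀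
        exact ⟨y, hy, h2⟩
    have hαL : α ∈ L := hWL hαW
    have hBbα : Bb < α := by
      obtain ⟨x₀, hx₀⟩ := hlimY.1
      obtain ⟨y, hy, _, h2⟩ := hlimY.2 x₀ hx₀
      exact lt_trans hy.2.2 h2
    -- choose a realizing β and the tail witness
    obtain ⟨β, hβA, hβgt⟩ := hkfspec α hαL (max (γc α) α)
    simp only [max_lt_iff] at hβgt
    obtain ⟨lam, hlam, htail⟩ := tail_coh C hC1 hC2 β α (hLlim α hαL) hβA.2.1
    -- kf α ≤ kb
    obtain ⟨α₁, hα₁Y, hα₁1, hα₁2⟩ := hlimY.2 lam hlam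
    have hk1 := hkey α₁ α β lam hα₁Y.1 hαW hβA.1 hα₁2 hβA.2.1 hβgt.1 hβA.2.2 htail hα₁1
    rw [hα₁Y.2.1] at hk1
    -- kf α ≥ kb
    have hk2 : kb ≤ kf α := by
      by_contra hcon; push_neg at hcon
      have hmem : α ∈ (if kf α < kb then {α' | α' ∈ W ∧ kf α' = kf α} else (∅ : Set ι)) := by
        rw [if_pos hcon]; exact ⟨hαW, rfl⟩
      have h1 := hbj (kf α) α hmem
      have h2 := hBb _ ⟨kf α, rfl⟩
      exact absurd (h1.trans h2.le) (not_le.2 hBbα)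
    have hkfα : kf α = kb := by omega
    refine ⟨⟨hαW, hkfα, hBbα⟩, lam, hlam, fun α₁' hα₁'Y hl1 hl2 => ?_⟩
    have hk3 := hkey α₁' α β lam hα₁'Y.1 hαW hβA.1 hl2 hβA.2.1 hβgt.1 hβA.2.2 htail hl1
    rw [hα₁'Y.2.1, hkfα] at hk3
    have hck0 : ck C hC1 α α₁' = 0 := by omega
    exact (ck_eq_zero_iff C hC1 hl2).1 hck0
  -- pressing: a single tail value works unboundedly often
  have hlamf : ∀ α, ∃ lam, IsLimitPtOf α Y → (lam < α ∧
      ∀ α₁ ∈ Y, lam < α₁ → α₁ < α → IsLimitPtOf α₁ (Cs C α)) := by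
    intro α
    by_cases hα : IsLimitPtOf α Y
    · obtain ⟨_, lam, h1, h2⟩ := hstar α hα
      exact ⟨lam, fun _ => ⟨h1, h2⟩⟩
    · obtain ⟨x₀⟩ := hne
      exact ⟨x₀, fun h => absurd h hα⟩
  choose lamf hlamf2 using hlamf
  have hpress : ∃ x, Unbdd {α | IsLimitPtOf α Y ∧ lamf α = x} := by
    by_contra hcon; push_neg at hcon
    have hbz : ∀ x, ∃ b, ∀ y ∈ {α | IsLimitPtOf α Y ∧ lamf α = x}, y ≤ b := by
      intro x
      have := hcon x
      unfold Unbdd at this; push_neg at this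
      obtain ⟨b, hb⟩ := this
      exact ⟨b, fun y hy => hb y hy⟩
    choose bz hbz using hbz
    obtain ⟨x₀⟩ := hne
    obtain ⟨w, _, hwY, hwcl⟩ := closure_point hcts Y hYunb bz (hIic bz) x₀
    have h1 := (hlamf2 w hwY).1
    have h2 := hwcl (lamf w) h1
    exact absurd (hbz (lamf w) w ⟨hwY, rfl⟩) (not_le.2 h2)
  obtain ⟨xs, hxs⟩ := hpress
  set Q : Set ι := {α | (IsLimitPtOf α Y ∧ lamf α = xs) ∧ xs < α} with hQ
  have hQunb : Unbdd Q := by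
    intro z
    obtain ⟨α, hα, hzα⟩ := hxs (max z xs)
    exact ⟨α, ⟨hα, lt_of_le_of_lt (le_max_right _ _) hzα⟩,
      lt_of_le_of_lt (le_max_left _ _) hzα⟩
  refine build_thread C hC1 hC2 Q hQunb (fun α hα => limPt_isLimitElem hα.1.1) ?_
  intro α hα α' hα' hlt
  have hαY : α ∈ Y := (hstar α hα.1.1).1
  have hprop := (hlamf2 α' hα'.1.1).2
  rw [hα'.1.2] at hprop
  exact hprop α hαY hα.2 hlt

end Steps
end Pf15

namespace Pf15
open Set

section UnbPairs
variable {ι : Type} [LinearOrder ι] [WellFoundedLT ι]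
variable (C : ι → Set ι)
variable (hC1 : ∀ α, IsLimitElem α → IsClubBelow (C α) α)
variable (hC2 : ∀ β, IsLimitElem β → ∀ α, IsLimitPtOf α (C β) → C α = C β ∩ Set.Iio α)

include hC1 hC2 in
lemma unb_pairs (hcts : ∀ s : Set ι, s.Countable → ∃ b, ∀ x ∈ s, x < b)
    (hIic : ∀ g : ι → ι, ∀ z : ι, ∃ b, ∀ x ≤ z, g x < b)
    (hnomax : ∀ x : ι, ∃ y, x < y)
    (hC3 : ¬ ∃ D, IsClubIn D ∧ ∀ α, IsLimitPtOf α D → C α = D ∩ Iio α)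
    (f g : ι → ℕ) : ∃ β ξ, ξ < β ∧ f ξ + g β ≤ rk C hC1 β ξ := by
  by_contra hcon; push_neg at hcon
  have hcover : ∃ N, Unbdd {x : ι | f x ≤ N ∧ g x ≤ N} := by
    refine unbdd_subset_union_nat hcts (fun n => {x : ι | f x ≤ n ∧ g x ≤ n})
      (U := univ) (fun x => ?_) (fun x _ => ?_)
    · obtain ⟨y, hy⟩ := hnomax x; exact ⟨y, trivial, hy⟩
    · exact mem_iUnion.2 ⟨max (f x) (g x), le_max_left _ _, le_max_right _ _⟩
  obtain ⟨N, hN⟩ := hcover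
  refine hC3 (steps C hC1 hC2 hcts hIic _ hN (N + N) ?_)
  intro ξ β hξ hβ hlt
  have h1 := hcon β ξ hlt
  have h2 := hξ.1
  have h3 := hβ.2
  omega

end UnbPairs

section Fan
variable {ι : Type}

def Bset (f : ι → ℕ) : Set (Option (ι × ℕ)) :=
  {x | x = none ∨ ∃ p : ι × ℕ, x = some p ∧ f p.1 ≤ p.2}

lemma Bset_none (f : ι → ℕ) : none ∈ Bset f := Or.inl rfl

lemma Bset_open (f : ι → ℕ) : (fanTopology ι).IsOpen (Bset f) :=
  fun _ => ⟨f, fun p hp => Or.inr ⟨p, rfl, hp⟩⟩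

lemma Bset_some {f : ι → ℕ} {p : ι × ℕ} (h : some p ∈ Bset f) : f p.1 ≤ p.2 := by
  rcases h with h | ⟨q, hq, h2⟩
  · exact absurd h (Option.some_ne_none p)
  · rw [Option.some_inj] at hq; rw [hq]; exact h2

lemma Bset_sub {u : Set (Option (ι × ℕ))} {f : ι → ℕ}
    (hnu : none ∈ u) (hf : ∀ p : ι × ℕ, f p.1 ≤ p.2 → some p ∈ u) : Bset f ⊆ u := by
  rintro x (h | ⟨p, hp, h2⟩)
  · rw [h]; exact hnu
  · rw [hp]; exact hf p h2

lemma notMem_closure_of_open {T : Set (Option (ι × ℕ) × Option (ι × ℕ))} (f g : ι → ℕ)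
    (h : ∀ x ∈ T, x ∉ (Bset f) ×ˢ (Bset g)) :
    (none, none) ∉ @closure _ (fanSqTopology ι) T := by
  letI t1 : TopologicalSpace (Option (ι × ℕ)) := fanTopology ι
  letI t2 : TopologicalSpace (Option (ι × ℕ) × Option (ι × ℕ)) := fanSqTopology ι
  intro hmem
  have hopen : IsOpen ((Bset f) ×ˢ (Bset g)) := IsOpen.prod (Bset_open f) (Bset_open g)
  obtain ⟨x, hx1, hx2⟩ := mem_closure_iff.1 hmem _ hopen ⟨Bset_none f, Bset_none g⟩
  exact h x hx2 hx1

lemma mem_closure_of_hits {T : Set (Option (ι × ℕ) × Option (ι × ℕ))}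
    (h : ∀ f g : ι → ℕ, ∃ x ∈ T, x ∈ (Bset f) ×ˢ (Bset g)) :
    (none, none) ∈ @closure _ (fanSqTopology ι) T := by
  letI t1 : TopologicalSpace (Option (ι × ℕ)) := fanTopology ι
  letI t2 : TopologicalSpace (Option (ι × ℕ) × Option (ι × ℕ)) := fanSqTopology ι
  rw [mem_closure_iff]
  intro o ho hmem
  rw [fanSqTopology, isOpen_prod_iff] at ho
  obtain ⟨u, v, hu, hv, hnu, hnv, huv⟩ := ho none none hmem
  obtain ⟨fu, hfu⟩ := hu hnu
  obtain ⟨gv, hgv⟩ := hv hnv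
  obtain ⟨x, hxT, hx1, hx2⟩ := h fu gv
  exact ⟨x, huv ⟨Bset_sub hnu hfu hx1, Bset_sub hnv hgv hx2⟩, hxT⟩

end Fan
end Pf15

/-- If `θ` is regular uncountable and `□(θ)` holds, then there is a `θ`-good
subset of `F_{θ,ω} × F_{θ,ω}`. -/
theorem statement15 (θ : Cardinal) (hreg : θ.IsRegular) (hθ : ℵ₀ < θ)
    (hsq : SquareTheta θ.ord.ToType) :
    ∃ S : Set (Option (θ.ord.ToType × ℕ) × Option (θ.ord.ToType × ℕ)),
      IsThetaGood θ S := by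
  classical
  obtain ⟨C, hC1, hC2, hC3⟩ := hsq
  -- basic cardinal facts about θ.ord.ToType
  have hbdd : ∀ S : Set θ.ord.ToType, #S < θ → ∃ b, ∀ x ∈ S, x < b := by
    intro S hS
    haveI inst : IsWellOrder θ.ord.ToType (· < ·) := isWellOrder_lt
    have h2 : #S < (@Ordinal.type θ.ord.ToType (· < ·) inst).cof := by
      rw [Ordinal.type_toType, hreg.cof_eq]; exact hS
    by_contra hcon; push_neg at hcon
    rw [Ordinal.cof_type] at h2
    exact absurd (Order.cof_le (s := S) hcon) (not_le.2 h2)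
  have hcts : ∀ S : Set θ.ord.ToType, S.Countable → ∃ b, ∀ x ∈ S, x < b := by
    intro S hS
    exact hbdd S (lt_of_le_of_lt hS.le_aleph0 hθ)
  have hnomax : ∀ x : θ.ord.ToType, ∃ y, x < y := by
    intro x
    obtain ⟨b, hb⟩ := hbdd {x} (by
      rw [Cardinal.mk_singleton]
      exact lt_trans Cardinal.one_lt_aleph0 hθ)
    exact ⟨b, hb x rfl⟩
  have hIic : ∀ g : θ.ord.ToType → θ.ord.ToType, ∀ z : θ.ord.ToType, ∃ b, ∀ x ≤ z, g x < b := by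
    intro g z
    have hIz : #(Set.Iic z) < θ := by
      have h1 : Set.Iic z = insert z (Set.Iio z) := by
        ext y; simp [le_iff_lt_or_eq, or_comm]
      rw [h1]
      refine lt_of_le_of_lt (Cardinal.mk_insert_le) ?_
      have h2 : #(Set.Iio z) < θ := Cardinal.mk_Iio_ord_toType z
      exact Cardinal.add_lt_of_lt hθ.le h2 (lt_trans Cardinal.one_lt_aleph0 hθ)
    obtain ⟨b, hb⟩ := hbdd (g '' Set.Iic z) (lt_of_le_of_lt Cardinal.mk_image_le hIz)
    exact ⟨b, fun x hx => hb (g x) ⟨x, hx, rfl⟩⟩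
  -- the walk family and its unboundedness
  have hUnb : ∀ f g : θ.ord.ToType → ℕ, ∃ β ξ, ξ < β ∧ f ξ + g β ≤ Pf15.rk C hC1 β ξ :=
    Pf15.unb_pairs C hC1 hC2 hcts hIic hnomax hC3
  -- the good set
  refine ⟨{x | ∃ β ξ n, ξ < β ∧ x = (some (ξ, Pf15.rk C hC1 β ξ - n), some (β, n))}, ?_, ?_⟩
  · -- (*,*) in the closure
    refine Pf15.mem_closure_of_hits (fun f g => ?_)
    obtain ⟨β, ξ, hlt, hge⟩ := hUnb f g
    refine ⟨(some (ξ, Pf15.rk C hC1 β ξ - g β), some (β, g β)), ⟨β, ξ, g β, hlt, rfl⟩, ?_, ?_⟩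
    · exact Or.inr ⟨(ξ, Pf15.rk C hC1 β ξ - g β), rfl, by simp only; omega⟩
    · exact Or.inr ⟨(β, g β), rfl, le_refl _⟩
  · -- no small subset accumulates
    intro T hTS hTθ
    set B : Set θ.ord.ToType := {β | ∃ ξ n, (some (ξ, Pf15.rk C hC1 β ξ - n), some (β, n)) ∈ T} with hB
    have hBT : #B ≤ #T := by
      have hchoice : ∀ β : B, ∃ t : T, ∃ ξ n, (t : _) =
          (some (ξ, Pf15.rk C hC1 (β : θ.ord.ToType) ξ - n), some ((β : θ.ord.ToType), n)) := by
        rintro ⟨β, hβ⟩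
        obtain ⟨ξ, n, hmem⟩ := hβ
        exact ⟨⟨_, hmem⟩, ξ, n, rfl⟩
      choose φ hφ using hchoice
      refine Cardinal.mk_le_of_injective (f := φ) ?_
      rintro ⟨β₁, hβ₁⟩ ⟨β₂, hβ₂⟩ heq
      obtain ⟨ξ₁, n₁, h1⟩ := hφ ⟨β₁, hβ₁⟩
      obtain ⟨ξ₂, n₂, h2⟩ := hφ ⟨β₂, hβ₂⟩
      rw [heq] at h1
      rw [h1] at h2
      simp only [Prod.mk.injEq, Option.some_inj, Prod.mk.injEq] at h2
      exact Subtype.ext h2.2.1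
    obtain ⟨γ, hγ⟩ := hbdd B (lt_of_le_of_lt hBT hTθ)
    -- a weak bound for the family on B
    have hwb : ∀ β : θ.ord.ToType, ∃ m : ℕ, β ∈ B → ∀ ξ, ξ < β →
        Pf15.rk C hC1 β ξ < Pf15.rk C hC1 γ ξ + m := by
      intro β
      by_cases hβ : β ∈ B
      · obtain ⟨n, hn⟩ := Pf15.coh C hC1 hC2 β γ (le_of_lt (hγ β hβ))
        exact ⟨n + 1, fun _ ξ hξ => by have := (hn ξ hξ).1; omega⟩
      · exact ⟨0, fun h => absurd h hβ⟩
    choose m hm using hwb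
    refine Pf15.notMem_closure_of_open (fun ξ => Pf15.rk C hC1 γ ξ + 1) m (fun x hxT hxmem => ?_)
    obtain ⟨β, ξ, n, hlt, hxeq⟩ := hTS hxT
    have hβB : β ∈ B := ⟨ξ, n, hxeq ▸ hxT⟩
    rw [hxeq] at hxmem
    have h1 := Pf15.Bset_some hxmem.1
    have h2 := Pf15.Bset_some hxmem.2
    simp only at h1 h2
    have h3 := hm β hβB ξ hlt
    omega
end

section
/- Let θ be a regular uncountable cardinal and suppose there exists a non-reflecting stationary set E ⊆ {α < θ : cf(α) = ω}. Then there exists a non-extendible initially weakly bounded θ-family. -/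
open Cardinal Set TopologicalSpace

section S16Aux

variable {ι : Type*} [LinearOrder ι]

lemma s16_exists_isLUB [WellFoundedLT ι] {s : Set ι} (hne : s.Nonempty) {b : ι}
    (hb : b ∈ upperBounds s) : ∃ x, IsLUB s x := by
  have hT : (upperBounds s).Nonempty := ⟨b, hb⟩
  refine ⟨(wellFounded_lt (α := ι)).min _ hT, WellFounded.min_mem _ _ hT, fun y hy => ?_⟩
  exact le_of_not_gt (WellFounded.not_lt_min _ _ hy)

lemma s16_exists_seq (R : ℕ → ι → ι → Prop) (hR : ∀ n a, ∃ b, R n a b) (a0 : ι) :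
    ∃ x : ℕ → ι, x 0 = a0 ∧ ∀ n, R n (x n) (x (n + 1)) := by
  choose f hf using hR
  exact ⟨fun n => Nat.rec a0 f n, rfl, fun n => hf n _⟩

lemma s16_isLUB_cofinal {x : ℕ → ι} {γ : ι} (hmono : Monotone x)
    (hγ : IsLUB (Set.range x) γ) {k : ℕ → ℕ} (hk : ∀ n, n ≤ k n) :
    IsLUB (Set.range fun n => x (k n)) γ := by
  constructor
  · rintro _ ⟨n, rfl⟩; exact hγ.1 ⟨k n, rfl⟩
  · intro y hy
    apply hγ.2
    rintro _ ⟨n, rfl⟩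
    exact (hmono (hk n)).trans (hy ⟨n, rfl⟩)

lemma s16_iInter_club [WellFoundedLT ι]
    (hbd : ∀ f : ℕ → ι, ∃ b, ∀ n, f n ≤ b) (a0 : ι)
    (C : ℕ → Set ι) (hC : ∀ m, IsClubIn (C m)) : ∃ γ, ∀ m, γ ∈ C m := by
  obtain ⟨x, hx0, hxs⟩ := s16_exists_seq (fun n a b => a < b ∧ b ∈ C n.unpair.1)
    (fun n a => by obtain ⟨y, hy, hay⟩ := (hC n.unpair.1).1 a; exact ⟨y, hay, hy⟩) a0
  have hmono : Monotone x := monotone_nat_of_le_succ fun n => (hxs n).1.le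
  obtain ⟨b, hb⟩ := hbd x
  obtain ⟨γ, hγ⟩ := s16_exists_isLUB (Set.range_nonempty x)
    (by rintro _ ⟨n, rfl⟩; exact hb n : b ∈ upperBounds (Set.range x))
  refine ⟨γ, fun m => ?_⟩
  have hsub : (Set.range fun j => x (Nat.pair m j + 1)) ⊆ C m := by
    rintro _ ⟨j, rfl⟩
    have := (hxs (Nat.pair m j)).2
    rwa [Nat.unpair_pair] at this
  exact (hC m).2 _ hsub ⟨_, ⟨0, rfl⟩⟩ γ
    (s16_isLUB_cofinal hmono hγ fun j => (Nat.right_le_pair m j).trans (Nat.le_succ _))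

lemma s16_Ioi_club (hnomax : ∀ z : ι, ∃ y, z < y) (a : ι) : IsClubIn (Set.Ioi a) := by
  constructor
  · intro z
    obtain ⟨y, hy⟩ := hnomax (max a z)
    exact ⟨y, lt_of_le_of_lt (le_max_left _ _) hy, lt_of_le_of_lt (le_max_right _ _) hy⟩
  · intro s hs hne x hx
    obtain ⟨c, hc⟩ := hne
    exact lt_of_lt_of_le (hs hc) (hx.1 hc)

lemma s16_limitPts_club [WellFoundedLT ι] (hbd : ∀ f : ℕ → ι, ∃ b, ∀ n, f n ≤ b)
    (hnomax : ∀ z : ι, ∃ y, z < y) {S : Set ι} (hS : IsStationaryIn S) :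
    IsClubIn {β : ι | ∀ x < β, ∃ y ∈ S, x < y ∧ y < β} := by
  have hSu : ∀ a : ι, ∃ y, y ∈ S ∧ a < y := fun a => by
    obtain ⟨y, hyS, hy⟩ := hS _ (s16_Ioi_club hnomax a)
    exact ⟨y, hyS, hy⟩
  constructor
  · intro a
    obtain ⟨x, hx0, hxs⟩ := s16_exists_seq (fun _ u v => u < v ∧ v ∈ S)
      (fun _ u => by obtain ⟨y, hyS, hy⟩ := hSu u; exact ⟨y, hy, hyS⟩) a
    have hmono : StrictMono x := strictMono_nat_of_lt_succ fun n => (hxs n).1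
    obtain ⟨b, hb⟩ := hbd x
    obtain ⟨γ, hγ⟩ := s16_exists_isLUB (Set.range_nonempty x)
      (by rintro _ ⟨n, rfl⟩; exact hb n : b ∈ upperBounds (Set.range x))
    refine ⟨γ, fun z hz => ?_, ?_⟩
    · have : ∃ n, z < x n := by
        by_contra hcon
        push_neg at hcon
        exact absurd (hγ.2 (by rintro _ ⟨n, rfl⟩; exact hcon n)) (not_le.2 hz)
      obtain ⟨n, hn⟩ := this
      exact ⟨x (n + 1), (hxs n).2, hn.trans (hmono (Nat.lt_succ_self n)),
        lt_of_lt_of_le (hmono (Nat.lt_succ_self (n + 1))) (hγ.1 ⟨n + 2, rfl⟩)⟩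
    · have h01 : x 0 < x 1 := (hxs 0).1
      calc a = x 0 := hx0.symm
        _ < x 1 := h01
        _ ≤ γ := hγ.1 ⟨1, rfl⟩
  · intro s hsub hne γ hγ z hz
    by_cases hγs : γ ∈ s
    · exact hsub hγs z hz
    · have : ∃ d ∈ s, z < d := by
        by_contra hcon
        push_neg at hcon
        exact absurd (hγ.2 fun d hd => hcon d hd) (not_le.2 hz)
      obtain ⟨d, hds, hzd⟩ := this
      have hdγ : d < γ := lt_of_le_of_ne (hγ.1 hds) fun h => hγs (h ▸ hds)
      obtain ⟨y, hyS, hzy, hyd⟩ := hsub hds z hzd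
      exact ⟨y, hyS, hzy, hyd.trans hdγ⟩

lemma s16_exists_bounding_below [WellFoundedLT ι] {E : Set ι} {h : ι → ι → ℕ}
    (hmono : ∀ β ∈ E, ∀ ξ ξ' : ι, ξ ≤ ξ' → ξ' < β → h β ξ ≤ h β ξ')
    (hNR : NonReflecting E) (γ : ι) :
    ∃ g : ι → ℕ, ∀ β ∈ E, β < γ → WeaklyBounds g h β := by
  induction γ using WellFoundedLT.induction with
  | ind γ IH =>
  classical
  obtain ⟨G, hG⟩ : ∃ G : ι → ι → ℕ, ∀ δ, δ < γ → ∀ β ∈ E, β < δ → WeaklyBounds (G δ) h β := by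
    choose G hG using IH
    exact ⟨fun δ => if hδ : δ < γ then G δ hδ else fun _ => 0,
      fun δ hδ => by simp only [dif_pos hδ]; exact hG δ hδ⟩
  by_cases hlim : IsLimitElem γ
  · obtain ⟨C, hCclub, hCE⟩ : ∃ C, IsClubBelow C γ ∧ (E ∩ Set.Iio γ) ∩ C = ∅ := by
      by_contra hcon
      push_neg at hcon
      exact hNR γ hlim fun C hC => hcon C hC
    obtain ⟨hCsub, hCunb, hCcl⟩ := hCclub
    have hβC : ∀ β ∈ E, β < γ → β ∉ C := fun β hβ hβγ hC =>
      Set.eq_empty_iff_forall_notMem.1 hCE β ⟨⟨hβ, hβγ⟩, hC⟩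
    have hne : ∀ ξ : ι, ξ < γ → (C ∩ Set.Ioi ξ).Nonempty := fun ξ hξ => by
      obtain ⟨y, hyC, hy⟩ := hCunb ξ hξ
      exact ⟨y, hyC, hy⟩
    set nxt : ι → ι := fun ξ =>
      if hξ : (C ∩ Set.Ioi ξ).Nonempty then (wellFounded_lt (α := ι)).min _ hξ else ξ
      with hnxt_def
    have hnxt_mem : ∀ ξ, (C ∩ Set.Ioi ξ).Nonempty → nxt ξ ∈ C ∩ Set.Ioi ξ := fun ξ hξ => by
      simp only [hnxt_def, dif_pos hξ]
      exact WellFounded.min_mem _ _ hξ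
    have hnxt_min : ∀ ξ (hξ : (C ∩ Set.Ioi ξ).Nonempty), ∀ y ∈ C ∩ Set.Ioi ξ, ¬ y < nxt ξ :=
      fun ξ hξ y hy => by
        simp only [hnxt_def, dif_pos hξ]
        exact WellFounded.not_lt_min _ _ hy
    have hnxt_eq : ∀ ξ u, u ∈ C ∩ Set.Ioi ξ → (∀ y ∈ C ∩ Set.Ioi ξ, ¬ y < u) → nxt ξ = u :=
      fun ξ u hu hmin =>
        le_antisymm (not_lt.1 (hnxt_min ξ ⟨u, hu⟩ u hu)) (not_lt.1 (hmin _ (hnxt_mem ξ ⟨u, hu⟩)))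
    refine ⟨fun ξ => G (nxt ξ) ξ, fun β hβE hβγ => ?_⟩
    by_cases hCb : (C ∩ Set.Iio β).Nonempty
    · obtain ⟨l, hl⟩ := s16_exists_isLUB hCb (b := β) fun c hc => le_of_lt hc.2
      have hlβ' : l ≤ β := hl.2 fun c hc => le_of_lt hc.2
      have hlγ : l < γ := lt_of_le_of_lt hlβ' hβγ
      have hlC : l ∈ C := hCcl _ Set.inter_subset_left hCb l hlγ hl
      have hlβ : l < β := lt_of_le_of_ne hlβ' fun he => hβC β hβE hβγ (he ▸ hlC)
      have hneu := hne l hlγ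
      have huC : nxt l ∈ C ∩ Set.Ioi l := hnxt_mem l hneu
      have hβu : β < nxt l := by
        rcases lt_trichotomy β (nxt l) with hc | hc | hc
        · exact hc
        · exact absurd (hc ▸ huC.1) (hβC β hβE hβγ)
        · exact absurd (hl.1 ⟨huC.1, hc⟩) (not_le.2 huC.2)
      obtain ⟨n, hn⟩ := hG (nxt l) (hCsub huC.1) β hβE hβu
      refine ⟨max n (h β l + 1), fun ξ hξ => ?_⟩
      rcases le_or_gt ξ l with hcase | hcase
      · have h1 := hmono β hβE ξ l hcase hlβ
        have h2 : h β l + 1 ≤ max n (h β l + 1) := le_max_right _ _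
        omega
      · have hξu : nxt ξ = nxt l := by
          apply hnxt_eq
          · exact ⟨huC.1, lt_trans hξ hβu⟩
          · intro y hy
            exact hnxt_min l hneu y ⟨hy.1, lt_trans hcase hy.2⟩
        simp only [hξu]
        have h1 := hn ξ hξ
        have h2 : n ≤ max n (h β l + 1) := le_max_left _ _
        omega
    · have hneβ := hne β hβγ
      have huC : nxt β ∈ C ∩ Set.Ioi β := hnxt_mem β hneβ
      obtain ⟨n, hn⟩ := hG (nxt β) (hCsub huC.1) β hβE huC.2
      refine ⟨n, fun ξ hξ => ?_⟩
      have hξu : nxt ξ = nxt β := by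
        apply hnxt_eq
        · exact ⟨huC.1, lt_trans hξ huC.2⟩
        · intro y hy
          have hyβ : β < y := by
            rcases lt_trichotomy y β with hc | hc | hc
            · exact absurd ⟨y, hy.1, hc⟩ hCb
            · exact absurd (hc ▸ hy.1) (hβC β hβE hβγ)
            · exact hc
          exact hnxt_min β hneβ y ⟨hy.1, hyβ⟩
      simp only [hξu]
      exact hn ξ hξ
  · by_cases hex : ∃ x, x < γ
    · have hmax : ∃ x, x < γ ∧ ∀ y, y < γ → y ≤ x := by
        have h2 : ¬ ∀ x < γ, ∃ y, x < y ∧ y < γ := fun hc => hlim ⟨hex, hc⟩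
        push_neg at h2
        obtain ⟨x, hxγ, hx⟩ := h2
        exact ⟨x, hxγ, fun y hy => not_lt.1 fun hxy => absurd (hx y hxy) (not_le.2 hy)⟩
      obtain ⟨x, hxγ, hmax⟩ := hmax
      refine ⟨fun ξ => max (G x ξ) (h x ξ), fun β hβE hβγ => ?_⟩
      rcases (hmax β hβγ).lt_or_eq with hβx | rfl
      · obtain ⟨n, hn⟩ := hG x hxγ β hβE hβx
        refine ⟨n, fun ξ hξ => ?_⟩
        have h1 := hn ξ hξ
        have h2 : G x ξ ≤ max (G x ξ) (h x ξ) := le_max_left _ _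
        show h β ξ < max (G x ξ) (h x ξ) + n
        omega
      · exact ⟨1, fun ξ hξ => Nat.lt_succ_of_le (le_max_right _ _)⟩
    · exact ⟨fun _ => 0, fun β hβE hβγ => absurd ⟨β, hβγ⟩ hex⟩

end S16Aux

/-- If `θ` is regular uncountable and there is a non-reflecting stationary
set `E ⊆ {α < θ : cf(α) = ω}`, then there is a non-extendible i.w.b. `θ`-family. -/
theorem statement16 (θ : Cardinal) (hreg : θ.IsRegular) (hθ : ℵ₀ < θ)
    (hE : ∃ E : Set θ.ord.ToType,
      (∀ α ∈ E, CofOmega α) ∧ IsStationaryIn E ∧ NonReflecting E) :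
    ∃ h : θ.ord.ToType → θ.ord.ToType → ℕ, IWB θ h ∧ NonExtendible h := by
  classical
  obtain ⟨E, hEcof, hEstat, hENR⟩ := hE
  have hsmall : ∀ S : Set θ.ord.ToType, #S < θ → ∃ a, ∀ b ∈ S, b < a := by
    intro S hS
    by_contra hcon
    push_neg at hcon
    have := Order.cof_le (α := θ.ord.ToType) (s := S) hcon
    rw [Ordinal.cof_toType, hreg.cof_eq] at this
    exact absurd hS (not_lt.2 this)
  have hbd : ∀ f : ℕ → θ.ord.ToType, ∃ b, ∀ n, f n ≤ b := by
    intro f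
    obtain ⟨a, ha⟩ := hsmall (Set.range f)
      (lt_of_le_of_lt (Cardinal.mk_le_aleph0_iff.2 (Set.countable_range f)) hθ)
    exact ⟨a, fun n => (ha _ ⟨n, rfl⟩).le⟩
  have hnomax : ∀ z : θ.ord.ToType, ∃ y, z < y := by
    intro z
    obtain ⟨a, ha⟩ := hsmall {z}
      (by rw [Cardinal.mk_singleton]; exact lt_of_lt_of_le Cardinal.one_lt_aleph0 hθ.le)
    exact ⟨a, ha z rfl⟩
  have hlad : ∀ β : θ.ord.ToType, ∃ b : ℕ → θ.ord.ToType, β ∈ E →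
      StrictMono b ∧ (∀ n, b n < β) ∧ ∀ ξ < β, ∃ n, ξ ≤ b n := by
    intro β
    by_cases hβ : β ∈ E
    · obtain ⟨b, h1, h2, h3⟩ := hEcof β hβ
      exact ⟨b, fun _ => ⟨h1, h2, h3⟩⟩
    · exact ⟨fun _ => β, fun hc => absurd hc hβ⟩
  choose b hb using hlad
  set h : θ.ord.ToType → θ.ord.ToType → ℕ := fun β ξ =>
    if β ∈ E then (if hx : ∃ n, ξ ≤ b β n then Nat.find hx else 0) else 0 with hh
  have hval : ∀ β ∈ E, ∀ ξ : θ.ord.ToType, ∀ hx : ∃ n, ξ ≤ b β n, h β ξ = Nat.find hx := by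
    intro β hβ ξ hx
    simp only [hh, if_pos hβ, dif_pos hx]
  have hmono : ∀ β ∈ E, ∀ ξ ξ' : θ.ord.ToType, ξ ≤ ξ' → ξ' < β → h β ξ ≤ h β ξ' := by
    intro β hβ ξ ξ' hle hlt
    have hx' : ∃ n, ξ' ≤ b β n := (hb β hβ).2.2 ξ' hlt
    have hx : ∃ n, ξ ≤ b β n := hx'.imp fun n hn => hle.trans hn
    rw [hval β hβ ξ hx, hval β hβ ξ' hx']
    exact Nat.find_mono fun n hn => hle.trans hn
  have hbig : ∀ β ∈ E, ∀ ξ < β, ∀ k : ℕ, b β k < ξ → k < h β ξ := by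
    intro β hβ ξ hξ k hk
    have hx : ∃ n, ξ ≤ b β n := (hb β hβ).2.2 ξ hξ
    rw [hval β hβ ξ hx, Nat.lt_find_iff]
    intro m hm hcon
    exact absurd (hcon.trans ((hb β hβ).1.monotone hm)) (not_le.2 hk)
  refine ⟨h, ?_, ?_⟩
  · intro A hA
    obtain ⟨δ, hδ⟩ := hsmall A hA
    obtain ⟨g, hg⟩ := s16_exists_bounding_below hmono hENR δ
    refine ⟨g, fun β hβA => ?_⟩
    by_cases hβE : β ∈ E
    · exact hg β hβE (hδ β hβA)
    · refine ⟨1, fun ξ _ => ?_⟩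
      simp only [hh, if_neg hβE]
      omega
  · rintro ⟨g, hg⟩
    have hstat : ∃ m : ℕ, IsStationaryIn {ξ : θ.ord.ToType | g ξ = m} := by
      by_contra hcon
      push_neg at hcon
      have hclubs : ∀ m : ℕ, ∃ C : Set θ.ord.ToType, IsClubIn C ∧ ∀ ξ ∈ C, g ξ ≠ m := by
        intro m
        have h1 : ∃ C : Set θ.ord.ToType, IsClubIn C ∧ ¬({ξ | g ξ = m} ∩ C).Nonempty := by
          by_contra h2
          push_neg at h2
          exact hcon m fun C hC => h2 C hC
        obtain ⟨C, hC1, hC2⟩ := h1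
        exact ⟨C, hC1, fun ξ hξ hgξ => hC2 ⟨ξ, hgξ, hξ⟩⟩
      choose C hC1 hC2 using hclubs
      obtain ⟨a0⟩ : Nonempty θ.ord.ToType :=
        Ordinal.toType_nonempty_iff_ne_zero.2 hreg.ord_pos.ne'
      obtain ⟨γ, hγ⟩ := s16_iInter_club hbd a0 C hC1
      exact hC2 (g γ) γ (hγ (g γ)) rfl
    obtain ⟨m, hm⟩ := hstat
    obtain ⟨β, hβE, hβD⟩ := hEstat _ (s16_limitPts_club hbd hnomax hm)
    obtain ⟨n, hn⟩ := hg β (Set.mem_univ β)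
    obtain ⟨y, hyS, hy1, hy2⟩ := hβD (b β (m + n)) ((hb β hβE).2.1 (m + n))
    have h1 : m + n < h β y := hbig β hβE y hy2 (m + n) hy1
    have h2 : h β y < g y + n := hn y hy2
    have h3 : g y = m := hyS
    omega
end

section
/- Let θ be an uncountable cardinal. Suppose there exists a family ℋ = {H_{αβ} : α < β < θ} of finite closed-downward subsets of ω × ω such that (a) for every A ⊆ θ with |A| < θ there is f : θ → ω with (f(α),f(β)) ∉ H_{αβ} for all α < β in A, and (b) for every f : θ → ω there are α < β < θ with (f(α),f(β)) ∈ H_{αβ}. Then there exists a first countable, zero-dimensional topological space that is <θ-collectionwise Hausdorff but not ≤θ-collectionwise Hausdorff. -/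
open Cardinal Set TopologicalSpace

namespace Statement17Aux

open Set TopologicalSpace

variable {ι : Type} [LinearOrder ι]

/-- membership in basic nbhd of the top point `α` with parameter `n` -/
def inU (H : ι → ι → Set (ℕ × ℕ)) (α : ι) (n : ℕ) : ι ⊕ (ι × ι × ℕ × ℕ) → Prop
  | Sum.inl β => β = α
  | Sum.inr (a, b, k, m) =>
      (a = α ∧ a < b ∧ (k, m) ∈ H a b ∧ n ≤ k) ∨
      (b = α ∧ a < b ∧ (k, m) ∈ H a b ∧ n ≤ m)

def uset (H : ι → ι → Set (ℕ × ℕ)) (α : ι) (n : ℕ) : Set (ι ⊕ (ι × ι × ℕ × ℕ)) :=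
  {x | inU H α n x}

variable {H : ι → ι → Set (ℕ × ℕ)}

lemma inl_mem_uset {α β : ι} {n : ℕ} : Sum.inl β ∈ uset H α n ↔ β = α := Iff.rfl

lemma uset_anti {α : ι} {n n' : ℕ} (h : n ≤ n') : uset H α n' ⊆ uset H α n := by
  rintro (β | ⟨a, b, k, m⟩) hx
  · exact hx
  · rcases hx with ⟨h1, h2, h3, h4⟩ | ⟨h1, h2, h3, h4⟩
    · exact Or.inl ⟨h1, h2, h3, h.trans h4⟩
    · exact Or.inr ⟨h1, h2, h3, h.trans h4⟩

def fanT (H : ι → ι → Set (ℕ × ℕ)) : TopologicalSpace (ι ⊕ (ι × ι × ℕ × ℕ)) where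
  IsOpen V := ∀ α, Sum.inl α ∈ V → ∃ n, uset H α n ⊆ V
  isOpen_univ := fun _ _ => ⟨0, subset_univ _⟩
  isOpen_inter := by
    intro U V hU hV α hα
    obtain ⟨n, hn⟩ := hU α hα.1
    obtain ⟨m, hm⟩ := hV α hα.2
    exact ⟨max n m, fun x hx =>
      ⟨hn (uset_anti (le_max_left _ _) hx), hm (uset_anti (le_max_right _ _) hx)⟩⟩
  isOpen_sUnion := by
    intro S hS α hα
    obtain ⟨U, hU, hαU⟩ := hα
    obtain ⟨n, hn⟩ := hS U hU α hαU
    exact ⟨n, fun x hx => ⟨U, hU, hn hx⟩⟩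

lemma isOpen_iff {V : Set (ι ⊕ (ι × ι × ℕ × ℕ))} :
    @IsOpen _ (fanT H) V ↔ ∀ α, Sum.inl α ∈ V → ∃ n, uset H α n ⊆ V := Iff.rfl

lemma isOpen_uset (α : ι) (n : ℕ) : @IsOpen _ (fanT H) (uset H α n) := by
  intro β hβ
  rw [inl_mem_uset] at hβ
  subst hβ
  exact ⟨n, subset_rfl⟩

lemma isOpen_singleton_inr (p : ι × ι × ℕ × ℕ) :
    @IsOpen _ (fanT H) {Sum.inr p} := by
  intro β hβ
  exact absurd hβ (by simp)

lemma mem_nhds_iff' {α : ι} {V : Set (ι ⊕ (ι × ι × ℕ × ℕ))} :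
    V ∈ @nhds _ (fanT H) (Sum.inl α) ↔ ∃ n, uset H α n ⊆ V := by
  rw [@mem_nhds_iff _ (fanT H)]
  constructor
  · rintro ⟨W, hWV, hW, hαW⟩
    obtain ⟨n, hn⟩ := hW α hαW
    exact ⟨n, hn.trans hWV⟩
  · rintro ⟨n, hn⟩
    exact ⟨uset H α n, hn, isOpen_uset α n, inl_mem_uset.2 rfl⟩

/-- if `(n,m) ∉ H α β` (and `H α β` is c.d.w.) then the basic nbhds are disjoint -/
lemma disjoint_uset {α β : ι} {n m : ℕ} (hab : α < β)
    (hcdw : ∀ p ∈ H α β, ∀ q : ℕ × ℕ, q.1 ≤ p.1 → q.2 ≤ p.2 → q ∈ H α β)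
    (h : (n, m) ∉ H α β) : Disjoint (uset H α n) (uset H β m) := by
  rw [Set.disjoint_left]
  rintro (γ | ⟨a, b, k, l⟩) hx hy
  · rw [inl_mem_uset] at hx hy; exact hab.ne (hx.symm.trans hy)
  · rcases hx with ⟨h1, h2, h3, h4⟩ | ⟨h1, h2, h3, h4⟩ <;>
      rcases hy with ⟨g1, g2, g3, g4⟩ | ⟨g1, g2, g3, g4⟩
    · exact absurd (h1 ▸ g1 ▸ rfl) hab.ne
    · subst h1; subst g1
      exact h (hcdw _ h3 (n, m) h4 g4)
    · subst h1; subst g1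
      exact absurd h2 hab.asymm
    · exact absurd (h1 ▸ g1 ▸ rfl) hab.ne'

lemma mem_both {α β : ι} {n m : ℕ} (hab : α < β) (h : (n, m) ∈ H α β) :
    Sum.inr (α, β, n, m) ∈ uset H α n ∩ uset H β m :=
  ⟨Or.inl ⟨rfl, hab, h, le_refl n⟩, Or.inr ⟨rfl, hab, h, le_refl m⟩⟩


lemma isClosed_uset (hH : ∀ a b : ι, a < b → (H a b).Finite ∧ IsCDW (H a b))
    (α : ι) (n : ℕ) : @IsClosed _ (fanT H) (uset H α n) := by
  rw [← @isOpen_compl_iff _ _ (fanT H)]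
  intro β hβ
  have hβα : β ≠ α := fun h => hβ (inl_mem_uset.2 h)
  rcases hβα.lt_or_gt with hlt | hlt
  · -- β < α : find m with (m, n) ∉ H β α
    have hfin : {m : ℕ | (m, n) ∈ H β α}.Finite := by
      have : {m : ℕ | (m, n) ∈ H β α} = (fun m => (m, n)) ⁻¹' (H β α) := rfl
      rw [this]
      exact Set.Finite.preimage (fun a _ b _ h => congrArg Prod.fst h) (hH β α hlt).1
    obtain ⟨m, hm⟩ := hfin.infinite_compl.nonempty
    refine ⟨m, fun x hx hx' => ?_⟩
    exact Set.disjoint_left.mp (disjoint_uset hlt (hH β α hlt).2 hm) hx hx'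
  · -- α < β : find m with (n, m) ∉ H α β
    have hfin : {m : ℕ | (n, m) ∈ H α β}.Finite := by
      have : {m : ℕ | (n, m) ∈ H α β} = (fun m => (n, m)) ⁻¹' (H α β) := rfl
      rw [this]
      exact Set.Finite.preimage (fun a _ b _ h => congrArg Prod.snd h) (hH α β hlt).1
    obtain ⟨m, hm⟩ := hfin.infinite_compl.nonempty
    refine ⟨m, fun x hx hx' => ?_⟩
    exact Set.disjoint_left.mp (disjoint_uset hlt (hH α β hlt).2 hm).symm hx hx'

lemma isClosed_singleton_inr (p : ι × ι × ℕ × ℕ) :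
    @IsClosed _ (fanT H) {Sum.inr p} := by
  rw [← @isOpen_compl_iff _ _ (fanT H)]
  intro β _
  obtain ⟨a, b, k, l⟩ := p
  refine ⟨max k l + 1, fun x hx hx' => ?_⟩
  rw [Set.mem_singleton_iff] at hx'
  subst hx'
  rcases hx with ⟨_, _, _, h4⟩ | ⟨_, _, _, h4⟩ <;> omega

lemma closed_diff {X : Type*} [TopologicalSpace X] {A : Set X} (hA : IsClosed A)
    (hd : DiscreteTopology A) (x : X) : IsClosed (A \ {x}) := by
  have h1 : IsClosed {y : A | (y : X) ≠ x} := isClosed_discrete _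
  have h2 := hA.isClosedEmbedding_subtypeVal.isClosedMap _ h1
  have h3 : Subtype.val '' {y : A | (y : X) ≠ x} = A \ {x} := by
    ext z
    simp only [Set.mem_image, Set.mem_setOf_eq, Set.mem_diff, Set.mem_singleton_iff]
    exact ⟨fun ⟨y, hy, hyz⟩ => ⟨hyz ▸ y.2, hyz ▸ hy⟩, fun ⟨hz, hzx⟩ => ⟨⟨z, hz⟩, hzx, rfl⟩⟩
  rwa [h3] at h2

end Statement17Aux

open Statement17Aux in

/-- From a family `ℋ = {H_{αβ} : α < β < θ}` of finite c.d.w. subsets of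
`ω × ω` satisfying (a) and (b), one obtains a first countable, zero-dimensional,
`<θ`-cwH space that is not `≤θ`-cwH. -/
theorem statement17 (θ : Cardinal) (hθ : ℵ₀ < θ)
    (H : θ.ord.ToType → θ.ord.ToType → Set (ℕ × ℕ))
    (hH : ∀ α β : θ.ord.ToType, α < β → (H α β).Finite ∧ IsCDW (H α β))
    (ha : ∀ A : Set θ.ord.ToType, #A < θ →
      ∃ f : θ.ord.ToType → ℕ, ∀ α ∈ A, ∀ β ∈ A, α < β → (f α, f β) ∉ H α β)
    (hb : ∀ f : θ.ord.ToType → ℕ, ∃ α β : θ.ord.ToType, α < β ∧ (f α, f β) ∈ H α β) :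
    ∃ (X : Type) (t : TopologicalSpace X),
      @FirstCountableTopology X t ∧ @ZeroDimensional X t ∧
        @CwHLt X t θ ∧ ¬ @CwHLe X t θ := by
  classical
  letI t : TopologicalSpace (θ.ord.ToType ⊕ (θ.ord.ToType × θ.ord.ToType × ℕ × ℕ)) :=
    fanT H
  refine ⟨_, t, ?_, ?_, ?_, ?_⟩
  · -- first countable
    constructor
    rintro (α | p)
    · have hb : (@nhds _ t (Sum.inl α)).HasBasis (fun _ : ℕ => True) (uset H α) := by
        refine ⟨fun V => ?_⟩
        rw [mem_nhds_iff']
        simp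
      exact hb.isCountablyGenerated
    · rw [(isOpen_singleton_iff_nhds_eq_pure (Sum.inr p)).mp (isOpen_singleton_inr p),
        ← Filter.principal_singleton]
      infer_instance
  · -- zero dimensional
    refine ⟨{V | (∃ α n, V = uset H α n) ∨ ∃ p, V = {Sum.inr p}}, ?_, ?_⟩
    · refine TopologicalSpace.isTopologicalBasis_of_isOpen_of_nhds ?_ ?_
      · rintro u (⟨α, n, rfl⟩ | ⟨p, rfl⟩)
        · exact isOpen_uset α n
        · exact isOpen_singleton_inr p
      · rintro (α | p) u hx hu
        · obtain ⟨n, hn⟩ := hu α hx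
          exact ⟨uset H α n, Or.inl ⟨α, n, rfl⟩, inl_mem_uset.2 rfl, hn⟩
        · exact ⟨{Sum.inr p}, Or.inr ⟨p, rfl⟩, rfl, Set.singleton_subset_iff.2 hx⟩
    · rintro u (⟨α, n, rfl⟩ | ⟨p, rfl⟩)
      · exact ⟨isClosed_uset hH α n, isOpen_uset α n⟩
      · exact ⟨isClosed_singleton_inr p, isOpen_singleton_inr p⟩
  · -- < θ cwH
    rintro A ⟨hAcl, hAdisc⟩ hcard
    set A₀ : Set θ.ord.ToType := {α | Sum.inl α ∈ A} with hA₀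
    have hcard₀ : #A₀ < θ := by
      refine lt_of_le_of_lt (Cardinal.mk_le_of_injective
        (f := fun a : A₀ => (⟨Sum.inl a.1, a.2⟩ : A)) ?_) hcard
      intro a b hab
      exact Subtype.ext (Sum.inl_injective (congrArg Subtype.val hab))
    obtain ⟨f, hf⟩ := ha A₀ hcard₀
    refine ⟨Sum.elim (fun α => uset H α (f α) \ (A \ {Sum.inl α}))
      (fun p => {Sum.inr p}), ?_, ?_, ?_⟩
    · rintro (α | p) hx
      · exact (isOpen_uset α (f α)).sdiff (closed_diff hAcl hAdisc _)
      · exact isOpen_singleton_inr p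
    · rintro (α | p) hx
      · exact ⟨inl_mem_uset.2 rfl, fun h => h.2 rfl⟩
      · exact rfl
    · rintro (α | p) hx (β | q) hy hne <;>
        simp only [Sum.elim_inl, Sum.elim_inr]
      · have hαβ : α ≠ β := fun h => hne (congrArg Sum.inl h)
        have key : ∀ γ δ : θ.ord.ToType, γ < δ → Sum.inl γ ∈ A → Sum.inl δ ∈ A →
            Disjoint (uset H γ (f γ)) (uset H δ (f δ)) := fun γ δ hlt hγ hδ =>
          disjoint_uset hlt (hH γ δ hlt).2 (hf γ hγ δ hδ hlt)
        rcases hαβ.lt_or_gt with hlt | hlt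
        · exact (key α β hlt hx hy).mono Set.diff_subset Set.diff_subset
        · exact ((key β α hlt hy hx).symm).mono Set.diff_subset Set.diff_subset
      · rw [Set.disjoint_singleton_right]
        exact fun h => h.2 ⟨hy, fun hc => by simp at hc⟩
      · rw [Set.disjoint_singleton_left]
        exact fun h => h.2 ⟨hx, fun hc => by simp at hc⟩
      · rw [Set.disjoint_singleton_right, Set.mem_singleton_iff]
        exact fun h => hne h.symm
  · -- not ≤ θ cwH
    intro hcwh
    set A : Set (θ.ord.ToType ⊕ (θ.ord.ToType × θ.ord.ToType × ℕ × ℕ)) :=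
      Set.range Sum.inl with hA
    have hAcl : IsClosed A := by
      rw [← @isOpen_compl_iff _ _ t]
      intro α hα
      exact absurd ⟨α, rfl⟩ hα
    have hAdisc : DiscreteTopology A := by
      rw [discreteTopology_iff_isOpen_singleton]
      rintro ⟨_, β, rfl⟩
      rw [isOpen_induced_iff]
      refine ⟨uset H β 0, isOpen_uset β 0, ?_⟩
      ext ⟨x, hx⟩
      obtain ⟨γ, rfl⟩ := hx
      simp only [Set.mem_preimage, Set.mem_singleton_iff, Subtype.ext_iff]
      rw [inl_mem_uset]
      exact ⟨fun h => congrArg Sum.inl h, fun h => Sum.inl_injective h⟩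
    have hAcard : #A ≤ θ := by
      rw [hA, Cardinal.mk_range_eq _ Sum.inl_injective, Cardinal.mk_ord_toType]
    obtain ⟨U, hUo, hUm, hUd⟩ := hcwh A ⟨hAcl, hAdisc⟩ hAcard
    have spec : ∀ α : θ.ord.ToType, ∃ n, uset H α n ⊆ U (Sum.inl α) := fun α =>
      (hUo (Sum.inl α) ⟨α, rfl⟩) α (hUm (Sum.inl α) ⟨α, rfl⟩)
    choose f hfspec using spec
    obtain ⟨α, β, hlt, hmem⟩ := hb f
    have hpt := mem_both hlt hmem
    have hdisj := hUd (Sum.inl α) ⟨α, rfl⟩ (Sum.inl β) ⟨β, rfl⟩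
      (fun h => hlt.ne (Sum.inl_injective h))
    exact Set.disjoint_left.mp hdisj (hfspec α hpt.1) (hfspec β hpt.2)
end
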